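/- For the R-FS_{ε,δ} iterates with 0 < ε ≤ δ and every k ≥ 0, there exists an index i ∈ {0, …, k} such that for every optimal solution β*_δ of the Lasso problem with parameter δ, the predictions satisfy ‖Xβ^i − Xβ*_δ‖₂ ≤ √( δ‖Xβ_LS‖₂²/(ε(k+1)) + 4δε ), where β_LS is any least squares solution. -/

import Mathlib

open Matrix Finset

noncomputable section

/-- Exact quadratic expansion of the least squares objective along a direction. -/
lemma aux_expand {n p : ℕ} (hn0 : (n : ℝ) ≠ 0) (X : Matrix (Fin n) (Fin p) ℝ)
    (y : Fin n → ℝ) (a d : Fin p → ℝ) (c : ℝ) :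
    (1 / (2 * (n : ℝ))) * ∑ i, (y i - X.mulVec (a + c • d) i) ^ 2
      = (1 / (2 * (n : ℝ))) * ∑ i, (y i - X.mulVec a i) ^ 2
        - (c / (n : ℝ)) * ∑ i, (y i - X.mulVec a i) * X.mulVec d i
        + c ^ 2 * (1 / (2 * (n : ℝ))) * ∑ i, (X.mulVec d i) ^ 2 := by
  have h : ∀ i, (y i - X.mulVec (a + c • d) i) ^ 2
      = (y i - X.mulVec a i) ^ 2 - (2 * c) * ((y i - X.mulVec a i) * X.mulVec d i)
        + c ^ 2 * (X.mulVec d i) ^ 2 := by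
    intro i
    simp only [Matrix.mulVec_add, Matrix.mulVec_smul, Pi.add_apply, Pi.smul_apply,
      smul_eq_mul]
    ring
  rw [Finset.sum_congr rfl fun i _ => h i, Finset.sum_add_distrib, Finset.sum_sub_distrib,
    ← Finset.mul_sum, ← Finset.mul_sum]
  field_simp

/-- ℓ₁-norm bound on prediction norms when the columns have unit norm. -/
lemma aux_l1 {n p : ℕ} (X : Matrix (Fin n) (Fin p) ℝ)
    (hcols : ∀ j : Fin p, ∑ i, (X i j) ^ 2 = 1) (u : Fin p → ℝ) :
    ∑ i, (X.mulVec u i) ^ 2 ≤ (∑ j, |u j|) ^ 2 := by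
  have hG : ∀ j j' : Fin p, |∑ i, X i j * X i j'| ≤ 1 := by
    intro j j'
    have h := Finset.sum_mul_sq_le_sq_mul_sq Finset.univ (fun i => X i j) (fun i => X i j')
    rw [hcols j, hcols j', one_mul] at h
    nlinarith [abs_nonneg (∑ i, X i j * X i j'), sq_abs (∑ i, X i j * X i j')]
  have key : ∑ i, (X.mulVec u i) ^ 2
      = ∑ j, ∑ j', (u j * u j') * ∑ i, X i j * X i j' := by
    have h1 : ∀ i : Fin n, (X.mulVec u i) ^ 2
        = ∑ j, ∑ j', (u j * u j') * (X i j * X i j') := by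
      intro i
      have hmv : X.mulVec u i = ∑ j, X i j * u j := rfl
      rw [hmv, sq, Finset.sum_mul_sum]
      refine Finset.sum_congr rfl fun j _ => Finset.sum_congr rfl fun j' _ => by ring
    rw [Finset.sum_congr rfl fun i _ => h1 i, Finset.sum_comm]
    refine Finset.sum_congr rfl fun j _ => ?_
    rw [Finset.sum_comm]
    refine Finset.sum_congr rfl fun j' _ => ?_
    rw [← Finset.mul_sum]
  rw [key, sq, Finset.sum_mul_sum]
  refine Finset.sum_le_sum fun j _ => Finset.sum_le_sum fun j' _ => ?_
  calc (u j * u j') * ∑ i, X i j * X i j'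
      ≤ |(u j * u j') * ∑ i, X i j * X i j'| := le_abs_self _
    _ = |u j| * |u j'| * |∑ i, X i j * X i j'| := by rw [abs_mul, abs_mul]
    _ ≤ |u j| * |u j'| * 1 :=
        mul_le_mul_of_nonneg_left (hG j j') (by positivity)
    _ = |u j| * |u j'| := mul_one _

/-- Bernoulli-type inequality used to bound `(1-α)^k`. -/
lemma aux_bern (α : ℝ) (h0 : 0 ≤ α) (h1 : α ≤ 1) :
    ∀ k : ℕ, (1 + (k : ℝ) * α) * (1 - α) ^ k ≤ 1 := by
  intro k
  induction k with
  | zero => simp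
  | succ k ih =>
    have hpow : (0 : ℝ) ≤ (1 - α) ^ k := pow_nonneg (by linarith) k
    have hcast : ((k + 1 : ℕ) : ℝ) = (k : ℝ) + 1 := by push_cast; ring
    rw [hcast, pow_succ]
    nlinarith [ih, hpow, mul_nonneg (mul_nonneg (by positivity : (0:ℝ) ≤ (k:ℝ) + 1)
      (mul_self_nonneg α)) hpow]

lemma aux_abs_sign (x : ℝ) : |Real.sign x| ≤ 1 := by
  rcases lt_trichotomy x 0 with h | h | h
  · rw [Real.sign_of_neg h]; norm_num
  · rw [h, Real.sign_zero]; norm_num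
  · rw [Real.sign_of_pos h]; norm_num

lemma aux_sign_mul (x : ℝ) : Real.sign x * x = |x| := by
  rcases lt_trichotomy x 0 with h | h | h
  · rw [Real.sign_of_neg h, abs_of_neg h]; ring
  · rw [h, Real.sign_zero, abs_zero, mul_zero]
  · rw [Real.sign_of_pos h, abs_of_pos h, one_mul]

lemma aux_single_abs {p : ℕ} (j0 : Fin p) :
    ∑ j, |(Pi.single j0 (1 : ℝ) : Fin p → ℝ) j| = 1 := by
  have h : ∀ j : Fin p, |(Pi.single j0 (1 : ℝ) : Fin p → ℝ) j| = if j = j0 then (1:ℝ) else 0 := by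
    intro j
    rw [Pi.single_apply]
    split_ifs <;> simp
  rw [Finset.sum_congr rfl fun j _ => h j, Finset.sum_ite_eq']
  simp

set_option maxHeartbeats 1600000 in
/-- **Theorem 4.1(ii) (predictions for R-FS_{ε,δ}).** For the R-FS_{ε,δ} iterates with
0 < ε ≤ δ and every k ≥ 0, there exists an index i ∈ {0,…,k} such that for every optimal
solution β*_δ of the Lasso problem with parameter δ:
`‖Xβ^i − Xβ*_δ‖₂ ≤ √(δ‖Xβ_LS‖₂²/(ε(k+1)) + 4δε)`. -/
theorem rfs_predictions_bound
    (n p : ℕ) (hn : 0 < n) (hp : 0 < p)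
    (X : Matrix (Fin n) (Fin p) ℝ)
    (hcols : ∀ j : Fin p, ∑ i, (X i j) ^ 2 = 1)
    (y : Fin n → ℝ)
    (Ln : (Fin p → ℝ) → ℝ)
    (hLn : Ln = fun β => (1 / (2 * (n : ℝ))) * ∑ i, (y i - X.mulVec β i) ^ 2)
    (δ : ℝ) (ε : ℝ) (hε0 : 0 < ε) (hεδ : ε ≤ δ)
    -- R-FS_{ε,δ} iterates
    (β : ℕ → Fin p → ℝ) (hβ0 : β 0 = 0)
    (r : ℕ → Fin n → ℝ) (hr : ∀ k, r k = y - X.mulVec (β k))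
    (jj : ℕ → Fin p)
    (hjmax : ∀ k, ∀ j' : Fin p, |∑ i, r k i * X i j'| ≤ |∑ i, r k i * X i (jj k)|)
    (hupd : ∀ k, β (k + 1) = (1 - ε / δ) • β k +
      (ε * Real.sign (∑ i, r k i * X i (jj k))) • (Pi.single (jj k) (1 : ℝ) : Fin p → ℝ))
    -- βLS is any least squares solution
    (βLS : Fin p → ℝ) (hβLS : (Xᵀ * X).mulVec βLS = Xᵀ.mulVec y) :
    ∀ k : ℕ, ∃ i ≤ k,
      ∀ βstar : Fin p → ℝ,
        ((∑ j, |βstar j|) ≤ δ ∧ ∀ β' : Fin p → ℝ, (∑ j, |β' j|) ≤ δ → Ln βstar ≤ Ln β') →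
        Real.sqrt (∑ t, (X.mulVec (β i) t - X.mulVec βstar t) ^ 2) ≤
          Real.sqrt (δ * (∑ t, (X.mulVec βLS t) ^ 2) / (ε * ((k : ℝ) + 1)) + 4 * δ * ε) := by
  have hδ : 0 < δ := lt_of_lt_of_le hε0 hεδ
  have hδ' : δ ≠ 0 := ne_of_gt hδ
  have hn' : (0 : ℝ) < (n : ℝ) := by exact_mod_cast hn
  have hn0 : (n : ℝ) ≠ 0 := ne_of_gt hn'
  have hα0 : 0 < ε / δ := div_pos hε0 hδ
  have hα1 : ε / δ ≤ 1 := (div_le_one hδ).2 hεδ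
  have hLb : ∀ b : Fin p → ℝ,
      Ln b = (1 / (2 * (n : ℝ))) * ∑ i, (y i - X.mulVec b i) ^ 2 := by
    intro b; simp only [hLn]
  -- ℓ1 feasibility of all iterates
  have hfeasB : ∀ k : ℕ, ∑ j, |β k j| ≤ δ := by
    intro k
    induction k with
    | zero => rw [hβ0]; simp; linarith
    | succ k ih =>
      rw [hupd k]
      have step : ∀ j : Fin p,
          |((1 - ε / δ) • β k + (ε * Real.sign (∑ i, r k i * X i (jj k))) •
              (Pi.single (jj k) (1 : ℝ) : Fin p → ℝ)) j|
            ≤ (1 - ε / δ) * |β k j|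
              + ε * |Real.sign (∑ i, r k i * X i (jj k))| * |(Pi.single (jj k) (1 : ℝ) : Fin p → ℝ) j| := by
        intro j
        simp only [Pi.add_apply, Pi.smul_apply, smul_eq_mul]
        calc |(1 - ε / δ) * β k j + ε * Real.sign (∑ i, r k i * X i (jj k)) *
              (Pi.single (jj k) (1 : ℝ) : Fin p → ℝ) j|
            ≤ |(1 - ε / δ) * β k j| + |ε * Real.sign (∑ i, r k i * X i (jj k)) *
              (Pi.single (jj k) (1 : ℝ) : Fin p → ℝ) j| := abs_add_le _ _
          _ = (1 - ε / δ) * |β k j|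
              + ε * |Real.sign (∑ i, r k i * X i (jj k))| * |(Pi.single (jj k) (1 : ℝ) : Fin p → ℝ) j| := by
              rw [abs_mul, abs_mul, abs_mul, abs_of_nonneg (by linarith : (0:ℝ) ≤ 1 - ε / δ),
                abs_of_pos hε0]
      calc ∑ j, |((1 - ε / δ) • β k + (ε * Real.sign (∑ i, r k i * X i (jj k))) •
              (Pi.single (jj k) (1 : ℝ) : Fin p → ℝ)) j|
          ≤ ∑ j, ((1 - ε / δ) * |β k j|
              + ε * |Real.sign (∑ i, r k i * X i (jj k))| * |(Pi.single (jj k) (1 : ℝ) : Fin p → ℝ) j|) :=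
            Finset.sum_le_sum fun j _ => step j
        _ = (1 - ε / δ) * (∑ j, |β k j|)
            + ε * |Real.sign (∑ i, r k i * X i (jj k))| * (∑ j, |(Pi.single (jj k) (1 : ℝ) : Fin p → ℝ) j|) := by
            rw [Finset.sum_add_distrib, ← Finset.mul_sum, ← Finset.mul_sum]
        _ ≤ (1 - ε / δ) * δ + ε * 1 * 1 := by
            have h1 : (1 - ε / δ) * (∑ j, |β k j|) ≤ (1 - ε / δ) * δ :=
              mul_le_mul_of_nonneg_left ih (by linarith)
            have h2 : ε * |Real.sign (∑ i, r k i * X i (jj k))| ≤ ε * 1 :=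
              mul_le_mul_of_nonneg_left (aux_abs_sign _) (le_of_lt hε0)
            rw [aux_single_abs (jj k)]
            nlinarith [aux_abs_sign (∑ i, r k i * X i (jj k))]
        _ = δ := by field_simp; ring
  intro k
  refine ⟨k, le_rfl, ?_⟩
  rintro βstar ⟨hfs, hopt⟩
  -- pointwise residual rewriting
  have hri : ∀ m : ℕ, ∀ i : Fin n, y i - X.mulVec (β m) i = r m i := by
    intro m i; rw [hr m]; simp
  -- key descent inequality
  have hdesc : ∀ m : ℕ, Ln (β (m + 1)) ≤ Ln (β m)
      + (ε / δ) * (Ln βstar - Ln (β m)) + 2 * ε ^ 2 / (n : ℝ) := by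
    intro m
    set G := ∑ i, r m i * X i (jj m) with hGdef
    set s := Real.sign G with hsdef
    set v : Fin p → ℝ := (δ * s) • (Pi.single (jj m) (1 : ℝ) : Fin p → ℝ) with hvdef
    have hstep : β m + (ε / δ) • (v - β m) = β (m + 1) := by
      rw [hupd m]
      ext j
      simp only [hvdef, Pi.add_apply, Pi.smul_apply, Pi.sub_apply, smul_eq_mul]
      field_simp
      ring
    have hexp := aux_expand hn0 X y (β m) (v - β m) (ε / δ)
    rw [hstep, ← hLb (β (m + 1)), ← hLb (β m)] at hexp
    simp only [hri m] at hexp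
    -- linear term: value for chosen direction
    have hXv : ∀ i, X.mulVec v i = (δ * s) * X i (jj m) := by
      intro i
      rw [hvdef, Matrix.mulVec_smul, Matrix.mulVec_single]
      simp [mul_assoc]
    have hsv : ∑ i, r m i * X.mulVec v i = δ * |G| := by
      have h1 : ∀ i, r m i * X.mulVec v i = (δ * s) * (r m i * X i (jj m)) := by
        intro i; rw [hXv i]; ring
      rw [Finset.sum_congr rfl fun i _ => h1 i, ← Finset.mul_sum, ← hGdef]
      rw [hsdef]
      rw [show δ * Real.sign G * G = δ * (Real.sign G * G) from by ring, aux_sign_mul]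
    -- linear term: comparison with βstar
    have hswap : ∀ w : Fin p → ℝ,
        ∑ i, r m i * X.mulVec w i = ∑ j, w j * ∑ i, r m i * X i j := by
      intro w
      calc ∑ i, r m i * X.mulVec w i = ∑ i, ∑ j, r m i * (X i j * w j) := by
            refine Finset.sum_congr rfl fun i _ => ?_
            rw [show X.mulVec w i = ∑ j, X i j * w j from rfl, Finset.mul_sum]
        _ = ∑ j, ∑ i, r m i * (X i j * w j) := Finset.sum_comm
        _ = ∑ j, w j * ∑ i, r m i * X i j := by
            refine Finset.sum_congr rfl fun j _ => ?_
            rw [Finset.mul_sum]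
            exact Finset.sum_congr rfl fun i _ => by ring
    have hstar_le : ∑ i, r m i * X.mulVec βstar i ≤ δ * |G| := by
      rw [hswap βstar]
      calc ∑ j, βstar j * ∑ i, r m i * X i j ≤ ∑ j, |βstar j| * |G| := by
            refine Finset.sum_le_sum fun j _ => ?_
            calc βstar j * ∑ i, r m i * X i j ≤ |βstar j * ∑ i, r m i * X i j| := le_abs_self _
              _ = |βstar j| * |∑ i, r m i * X i j| := abs_mul _ _
              _ ≤ |βstar j| * |G| :=
                  mul_le_mul_of_nonneg_left (hjmax m j) (abs_nonneg _)
        _ = (∑ j, |βstar j|) * |G| := by rw [← Finset.sum_mul]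
        _ ≤ δ * |G| := mul_le_mul_of_nonneg_right hfs (abs_nonneg _)
    -- convexity: lower bound on the βstar cross term
    have hconv := aux_expand hn0 X y (β m) (βstar - β m) 1
    have he1 : β m + (1 : ℝ) • (βstar - β m) = βstar := by ext j; simp
    rw [he1, ← hLb βstar, ← hLb (β m)] at hconv
    simp only [hri m] at hconv
    have hQ'nn : 0 ≤ ∑ i, (X.mulVec (βstar - β m) i) ^ 2 :=
      Finset.sum_nonneg fun i _ => sq_nonneg _
    have hQ'nn' : 0 ≤ (1:ℝ)^2 * (1 / (2 * (n:ℝ))) * ∑ i, (X.mulVec (βstar - β m) i) ^ 2 :=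
      mul_nonneg (by positivity) hQ'nn
    -- cross-term comparison
    have hsub : ∀ w : Fin p → ℝ, ∑ i, r m i * X.mulVec (w - β m) i
        = (∑ i, r m i * X.mulVec w i) - ∑ i, r m i * X.mulVec (β m) i := by
      intro w
      rw [← Finset.sum_sub_distrib]
      refine Finset.sum_congr rfl fun i _ => ?_
      rw [Matrix.mulVec_sub]
      simp [mul_sub]
    have hcross : ∑ i, r m i * X.mulVec (βstar - β m) i
        ≤ ∑ i, r m i * X.mulVec (v - β m) i := by
      rw [hsub v, hsub βstar, hsv]
      linarith [hstar_le]
    -- quadratic term bound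
    have hQbound : ∑ i, (X.mulVec (v - β m) i) ^ 2 ≤ (2 * δ) ^ 2 := by
      have h1 := aux_l1 X hcols (v - β m)
      have hvl1 : ∑ j, |v j| ≤ δ := by
        have h2 : ∀ j, |v j| = (δ * |s|) * |(Pi.single (jj m) (1 : ℝ) : Fin p → ℝ) j| := by
          intro j
          rw [hvdef]
          simp only [Pi.smul_apply, smul_eq_mul]
          rw [abs_mul, abs_mul, abs_of_pos hδ]
        rw [Finset.sum_congr rfl fun j _ => h2 j, ← Finset.mul_sum, aux_single_abs (jj m),
          mul_one]
        nlinarith [aux_abs_sign G, abs_nonneg s]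
      have h2 : ∑ j, |(v - β m) j| ≤ 2 * δ := by
        calc ∑ j, |(v - β m) j| ≤ ∑ j, (|v j| + |β m j|) := by
              refine Finset.sum_le_sum fun j _ => ?_
              simp only [Pi.sub_apply]
              exact abs_sub _ _
          _ = (∑ j, |v j|) + ∑ j, |β m j| := Finset.sum_add_distrib
          _ ≤ δ + δ := add_le_add hvl1 (hfeasB m)
          _ = 2 * δ := by ring
      have h3 : (0:ℝ) ≤ ∑ j, |(v - β m) j| := Finset.sum_nonneg fun j _ => abs_nonneg _
      nlinarith [h1, h2, h3]
    -- assemble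
    have hquad : (ε / δ) ^ 2 * (1 / (2 * (n : ℝ))) * (∑ i, (X.mulVec (v - β m) i) ^ 2)
        ≤ 2 * ε ^ 2 / (n : ℝ) := by
      calc (ε / δ) ^ 2 * (1 / (2 * (n : ℝ))) * (∑ i, (X.mulVec (v - β m) i) ^ 2)
          ≤ (ε / δ) ^ 2 * (1 / (2 * (n : ℝ))) * (2 * δ) ^ 2 :=
            mul_le_mul_of_nonneg_left hQbound (by positivity)
        _ = 2 * ε ^ 2 / (n : ℝ) := by field_simp
    have hlin : - ((ε / δ) / (n : ℝ)) * (∑ i, r m i * X.mulVec (v - β m) i)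
        ≤ (ε / δ) * (Ln βstar - Ln (β m)) := by
      have h1 : Ln (β m) - Ln βstar
          ≤ (1 / (n : ℝ)) * (∑ i, r m i * X.mulVec (βstar - β m) i) := by
        linarith [hconv, hQ'nn']
      have h2 : ((ε / δ) / (n : ℝ)) * (∑ i, r m i * X.mulVec (βstar - β m) i)
          ≤ ((ε / δ) / (n : ℝ)) * (∑ i, r m i * X.mulVec (v - β m) i) :=
        mul_le_mul_of_nonneg_left hcross (by positivity)
      have h3 : (ε / δ) * (Ln (β m) - Ln βstar)
          ≤ (ε / δ) * ((1 / (n : ℝ)) * (∑ i, r m i * X.mulVec (βstar - β m) i)) :=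
        mul_le_mul_of_nonneg_left h1 (le_of_lt hα0)
      have h4 : (ε / δ) * ((1 / (n : ℝ)) * (∑ i, r m i * X.mulVec (βstar - β m) i))
          = ((ε / δ) / (n : ℝ)) * (∑ i, r m i * X.mulVec (βstar - β m) i) := by ring
      linarith [h2, h3, h4]
    rw [hexp]
    linarith [hquad, hlin]
  -- orthogonality from the normal equations
  have hortho : ∀ d : Fin p → ℝ,
      ∑ i, (y i - X.mulVec βLS i) * X.mulVec d i = 0 := by
    intro d
    have hperp : ∀ j : Fin p, ∑ i, X i j * (y i - X.mulVec βLS i) = 0 := by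
      intro j
      have h1 := congrFun hβLS j
      rw [← Matrix.mulVec_mulVec] at h1
      have e : ∀ w : Fin n → ℝ, Xᵀ.mulVec w j = ∑ i, X i j * w i := by
        intro w
        simp [Matrix.mulVec, dotProduct, Matrix.transpose_apply]
      rw [e, e] at h1
      have h2 : ∑ i, X i j * (y i - X.mulVec βLS i)
          = (∑ i, X i j * y i) - ∑ i, X i j * X.mulVec βLS i := by
        rw [← Finset.sum_sub_distrib]
        exact Finset.sum_congr rfl fun i _ => by ring
      rw [h2]
      linarith [h1]
    calc ∑ i, (y i - X.mulVec βLS i) * X.mulVec d i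
        = ∑ j, d j * ∑ i, X i j * (y i - X.mulVec βLS i) := by
          calc ∑ i, (y i - X.mulVec βLS i) * X.mulVec d i
              = ∑ i, ∑ j, (y i - X.mulVec βLS i) * (X i j * d j) := by
                refine Finset.sum_congr rfl fun i _ => ?_
                rw [show X.mulVec d i = ∑ j, X i j * d j from rfl, Finset.mul_sum]
            _ = ∑ j, ∑ i, (y i - X.mulVec βLS i) * (X i j * d j) := Finset.sum_comm
            _ = ∑ j, d j * ∑ i, X i j * (y i - X.mulVec βLS i) := by
                refine Finset.sum_congr rfl fun j _ => ?_
                rw [Finset.mul_sum]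
                exact Finset.sum_congr rfl fun i _ => by ring
      _ = 0 := by
          rw [Finset.sum_congr rfl fun j _ => by rw [hperp j, mul_zero]]
          exact Finset.sum_const_zero
  -- βLS is a global minimizer
  have hLSopt : Ln βLS ≤ Ln βstar := by
    have h := aux_expand hn0 X y βLS (βstar - βLS) 1
    have e : βLS + (1 : ℝ) • (βstar - βLS) = βstar := by ext j; simp
    rw [e, ← hLb βstar, ← hLb βLS, hortho (βstar - βLS)] at h
    have hQ : 0 ≤ ∑ i, (X.mulVec (βstar - βLS) i) ^ 2 :=
      Finset.sum_nonneg fun i _ => sq_nonneg _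
    have hQ' : 0 ≤ (1:ℝ)^2 * (1 / (2 * (n:ℝ))) * ∑ i, (X.mulVec (βstar - βLS) i) ^ 2 :=
      mul_nonneg (by positivity) hQ
    linarith [h]
  -- initial gap bound
  have h0 : Ln (β 0) - Ln βstar ≤ (∑ t, (X.mulVec βLS t) ^ 2) / (2 * (n : ℝ)) := by
    have h := aux_expand hn0 X y βLS ((0 : Fin p → ℝ) - βLS) 1
    have e : βLS + (1 : ℝ) • ((0 : Fin p → ℝ) - βLS) = (0 : Fin p → ℝ) := by ext j; simp
    rw [e, ← hLb 0, ← hLb βLS, hortho ((0 : Fin p → ℝ) - βLS)] at h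
    have eq2 : ∑ i, (X.mulVec ((0 : Fin p → ℝ) - βLS) i) ^ 2 = ∑ t, (X.mulVec βLS t) ^ 2 := by
      refine Finset.sum_congr rfl fun i _ => ?_
      have : X.mulVec ((0 : Fin p → ℝ) - βLS) i = -(X.mulVec βLS i) := by
        rw [Matrix.mulVec_sub, Matrix.mulVec_zero]
        simp
      rw [this, neg_sq]
    rw [eq2] at h
    rw [hβ0]
    have e3 : (1:ℝ)^2 * (1 / (2 * (n:ℝ))) * (∑ t, (X.mulVec βLS t) ^ 2)
        = (∑ t, (X.mulVec βLS t) ^ 2) / (2 * (n : ℝ)) := by ring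
    linarith [hLSopt, h]
  -- the recursion bound
  have hSLSnn : 0 ≤ ∑ t, (X.mulVec βLS t) ^ 2 := Finset.sum_nonneg fun t _ => sq_nonneg _
  have hrec : ∀ m : ℕ, Ln (β m) - Ln βstar
      ≤ (1 - ε / δ) ^ m * ((∑ t, (X.mulVec βLS t) ^ 2) / (2 * (n : ℝ)))
        + 2 * ε * δ / (n : ℝ) := by
    intro m
    induction m with
    | zero =>
      simp only [pow_zero, one_mul]
      have : (0:ℝ) ≤ 2 * ε * δ / (n : ℝ) := by positivity
      linarith [h0]
    | succ m ih =>
      have hd := hdesc m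
      have key : Ln (β (m + 1)) - Ln βstar
          ≤ (1 - ε / δ) * (Ln (β m) - Ln βstar) + 2 * ε ^ 2 / (n : ℝ) := by
        nlinarith [hd]
      have h2 : (1 - ε / δ) * (Ln (β m) - Ln βstar)
          ≤ (1 - ε / δ) * ((1 - ε / δ) ^ m * ((∑ t, (X.mulVec βLS t) ^ 2) / (2 * (n : ℝ)))
            + 2 * ε * δ / (n : ℝ)) :=
        mul_le_mul_of_nonneg_left ih (by linarith)
      have heps : (ε / δ) * (2 * ε * δ / (n : ℝ)) = 2 * ε ^ 2 / (n : ℝ) := by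
        field_simp
      have h3 : (1 - ε / δ) * ((1 - ε / δ) ^ m * ((∑ t, (X.mulVec βLS t) ^ 2) / (2 * (n : ℝ)))
            + 2 * ε * δ / (n : ℝ)) + 2 * ε ^ 2 / (n : ℝ)
          = (1 - ε / δ) ^ (m + 1) * ((∑ t, (X.mulVec βLS t) ^ 2) / (2 * (n : ℝ)))
            + 2 * ε * δ / (n : ℝ) := by
        rw [pow_succ]
        linear_combination -heps
      linarith [key, h2, h3]
  -- first-order optimality at βstar gives strong convexity in predictions
  have hG0 : ∑ i, (y i - X.mulVec βstar i) * X.mulVec (β k - βstar) i ≤ 0 := by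
    set Gs := ∑ i, (y i - X.mulVec βstar i) * X.mulVec (β k - βstar) i with hGsdef
    set Q := ∑ i, (X.mulVec (β k - βstar) i) ^ 2 with hQdef
    have hQnn : 0 ≤ Q := Finset.sum_nonneg fun i _ => sq_nonneg _
    have hkey : ∀ t : ℝ, 0 < t → t ≤ 1 → Gs ≤ t * Q / 2 := by
      intro t ht0 ht1
      have hfeas_t : ∑ j, |(βstar + t • (β k - βstar)) j| ≤ δ := by
        calc ∑ j, |(βstar + t • (β k - βstar)) j|
            ≤ ∑ j, ((1 - t) * |βstar j| + t * |β k j|) := by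
              refine Finset.sum_le_sum fun j _ => ?_
              simp only [Pi.add_apply, Pi.smul_apply, Pi.sub_apply, smul_eq_mul]
              rw [show βstar j + t * (β k j - βstar j) = (1 - t) * βstar j + t * β k j
                from by ring]
              calc |(1 - t) * βstar j + t * β k j|
                  ≤ |(1 - t) * βstar j| + |t * β k j| := abs_add_le _ _
                _ = (1 - t) * |βstar j| + t * |β k j| := by
                    rw [abs_mul, abs_mul, abs_of_nonneg (by linarith : (0:ℝ) ≤ 1 - t),
                      abs_of_pos ht0]
          _ = (1 - t) * (∑ j, |βstar j|) + t * (∑ j, |β k j|) := by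
              rw [Finset.sum_add_distrib, ← Finset.mul_sum, ← Finset.mul_sum]
          _ ≤ (1 - t) * δ + t * δ :=
              add_le_add (mul_le_mul_of_nonneg_left hfs (by linarith))
                (mul_le_mul_of_nonneg_left (hfeasB k) (le_of_lt ht0))
          _ = δ := by ring
      have hopt_t := hopt _ hfeas_t
      have hexp_t := aux_expand hn0 X y βstar (β k - βstar) t
      rw [← hLb (βstar + t • (β k - βstar)), ← hLb βstar] at hexp_t
      rw [hexp_t] at hopt_t
      have h' : (t / (n : ℝ)) * Gs ≤ t ^ 2 * (1 / (2 * (n : ℝ))) * Q := by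
        rw [hGsdef, hQdef]; linarith [hopt_t]
      have ht0' : t ≠ 0 := ne_of_gt ht0
      have h3 := mul_le_mul_of_nonneg_left h'
        (le_of_lt (div_pos hn' ht0) : (0:ℝ) ≤ (n : ℝ) / t)
      have e1 : ((n : ℝ) / t) * ((t / (n : ℝ)) * Gs) = Gs := by field_simp
      have e2 : ((n : ℝ) / t) * (t ^ 2 * (1 / (2 * (n : ℝ))) * Q) = t * Q / 2 := by
        field_simp
      linarith [h3, e1.symm.le, e2.le]
    by_contra hpos
    push_neg at hpos
    have hQ1 : (0 : ℝ) < Q + 1 := by linarith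
    have htpos : 0 < min 1 (Gs / (Q + 1)) := lt_min one_pos (div_pos hpos hQ1)
    have ht := hkey (min 1 (Gs / (Q + 1))) htpos (min_le_left _ _)
    have hmin : min 1 (Gs / (Q + 1)) ≤ Gs / (Q + 1) := min_le_right _ _
    have h4 : min 1 (Gs / (Q + 1)) * Q ≤ (Gs / (Q + 1)) * Q :=
      mul_le_mul_of_nonneg_right hmin hQnn
    have h5 : (Gs / (Q + 1)) * Q / 2 < Gs := by
      rw [div_mul_eq_mul_div, div_div, div_lt_iff₀ (by positivity)]
      nlinarith [hpos, hQnn]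
    linarith [ht, h4, h5]
  have hsc : (1 / (2 * (n : ℝ))) * (∑ i, (X.mulVec (β k - βstar) i) ^ 2)
      ≤ Ln (β k) - Ln βstar := by
    have h := aux_expand hn0 X y βstar (β k - βstar) 1
    have e : βstar + (1 : ℝ) • (β k - βstar) = β k := by ext j; simp
    rw [e, ← hLb (β k), ← hLb βstar] at h
    have hGn : (1 / (n : ℝ)) * (∑ i, (y i - X.mulVec βstar i) * X.mulVec (β k - βstar) i)
        ≤ 0 := by
      have h1 := mul_le_mul_of_nonneg_left hG0 (by positivity : (0:ℝ) ≤ 1 / (n : ℝ))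
      simpa using h1
    nlinarith [h, hGn]
  -- Bernoulli bound
  have hbern := aux_bern (ε / δ) (le_of_lt hα0) hα1 k
  have hpnn : (0:ℝ) ≤ (1 - ε / δ) ^ k := pow_nonneg (by linarith) k
  have hpowle : (1 - ε / δ) ^ k ≤ 1 / ((ε / δ) * ((k : ℝ) + 1)) := by
    have hk1 : (0 : ℝ) < (ε / δ) * ((k : ℝ) + 1) := by positivity
    rw [le_div_iff₀ hk1]
    have hcoef : (ε / δ) * ((k : ℝ) + 1) ≤ 1 + (k : ℝ) * (ε / δ) := by nlinarith
    nlinarith [hbern, mul_le_mul_of_nonneg_left hcoef hpnn]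
  -- final assembly
  apply Real.sqrt_le_sqrt
  have hQf : ∑ t, (X.mulVec (β k) t - X.mulVec βstar t) ^ 2
      = ∑ i, (X.mulVec (β k - βstar) i) ^ 2 := by
    refine Finset.sum_congr rfl fun i _ => ?_
    rw [Matrix.mulVec_sub]
    simp
  rw [hQf]
  have hmain : (1 / (2 * (n : ℝ))) * (∑ i, (X.mulVec (β k - βstar) i) ^ 2)
      ≤ (1 - ε / δ) ^ k * ((∑ t, (X.mulVec βLS t) ^ 2) / (2 * (n : ℝ)))
        + 2 * ε * δ / (n : ℝ) := le_trans hsc (hrec k)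
  have h2n : ∑ i, (X.mulVec (β k - βstar) i) ^ 2
      ≤ (1 - ε / δ) ^ k * (∑ t, (X.mulVec βLS t) ^ 2) + 4 * ε * δ := by
    have hmul := mul_le_mul_of_nonneg_left hmain
      (le_of_lt (by positivity : (0:ℝ) < 2 * (n : ℝ)))
    have e1 : (2 * (n : ℝ)) * ((1 / (2 * (n : ℝ))) * (∑ i, (X.mulVec (β k - βstar) i) ^ 2))
        = ∑ i, (X.mulVec (β k - βstar) i) ^ 2 := by field_simp
    have e2 : (2 * (n : ℝ)) * ((1 - ε / δ) ^ k * ((∑ t, (X.mulVec βLS t) ^ 2) / (2 * (n : ℝ)))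
          + 2 * ε * δ / (n : ℝ))
        = (1 - ε / δ) ^ k * (∑ t, (X.mulVec βLS t) ^ 2) + 4 * ε * δ := by
      field_simp; ring
    linarith [hmul, e1.symm.le, e2.le]
  have hfin : (1 - ε / δ) ^ k * (∑ t, (X.mulVec βLS t) ^ 2)
      ≤ δ * (∑ t, (X.mulVec βLS t) ^ 2) / (ε * ((k : ℝ) + 1)) := by
    have h1 := mul_le_mul_of_nonneg_right hpowle hSLSnn
    have e : (1 / ((ε / δ) * ((k : ℝ) + 1))) * (∑ t, (X.mulVec βLS t) ^ 2)
        = δ * (∑ t, (X.mulVec βLS t) ^ 2) / (ε * ((k : ℝ) + 1)) := by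
      rw [div_mul_eq_mul_div, div_mul_eq_mul_div, one_mul]
      rw [div_div_eq_mul_div]
      congr 1
      ring
    linarith [h1, e.le, e.symm.le]
  linarith [h2n, hfin]

end
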